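/- For every fixed K > 0, the function F(n) = cosh((n+1)K) − 2^{n/2} (cosh K)^{n+1} of a real variable n satisfies F(0) = 0 and lim_{n→0} F(n)/n = K sinh K − cosh K·((log 2)/2 + log cosh K). Consequently, this limit vanishes if and only if −p log p − (1−p) log(1−p) = (log 2)/2, where p = e^K/(e^K + e^{-K}). -/

import Mathlib

open Real Filter Topology

/-- Nishimori-line probability `p = e^K / (e^K + e^{-K})`. -/
noncomputable def nlProb (K : ℝ) : ℝ := exp K / (exp K + exp (-K))

/-- `F(n) = cosh((n+1)K) - 2^{n/2} (cosh K)^{n+1}` as a function of a *real*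
replica number `n` (real powers), for fixed `K`. -/
noncomputable def Ffun (K n : ℝ) : ℝ :=
  cosh ((n + 1) * K) - (2 : ℝ) ^ (n / 2) * (cosh K) ^ (n + 1)

/-!
`F(0) = 0` and `F` is differentiable, so `F(n)/n` tends to `F'(0)`, which is computed by the
chain rule. On the entropy side, `log p = K - log (2 cosh K)`, `1 - p` is `p` at `-K`, and
`p - (1 - p) = tanh K`, so the binary entropy of `p` is `log (2 cosh K) - K tanh K`;
multiplying by `cosh K > 0` turns the entropy condition into `F'(0) = 0`.
-/

lemma Ffun_zero (K : ℝ) : Ffun K 0 = 0 := by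
  simp [Ffun]

lemma hasDerivAt_Ffun (K n : ℝ) :
    HasDerivAt (Ffun K)
      (K * sinh ((n + 1) * K) -
        2 ^ (n / 2) * cosh K ^ (n + 1) * (log 2 / 2 + log (cosh K))) n := by
  have hcosh := (((hasDerivAt_id n).add_const 1).mul_const K).cosh
  have htwo := ((hasDerivAt_id n).div_const 2).const_rpow two_pos
  have hpow := ((hasDerivAt_id n).add_const 1).const_rpow (cosh_pos K)
  exact (hcosh.sub (htwo.mul hpow)).congr_deriv (by simp only [id]; ring)

lemma tendsto_Ffun_div (K : ℝ) :
    Tendsto (fun n : ℝ => Ffun K n / n) (𝓝[≠] 0)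
      (𝓝 (K * sinh K - cosh K * (log 2 / 2 + log (cosh K)))) := by
  have h := hasDerivAt_iff_tendsto_slope.mp (hasDerivAt_Ffun K 0)
  simp only [zero_add, one_mul, zero_div, rpow_zero, rpow_one] at h
  refine h.congr fun n => ?_
  rw [slope_def_field, Ffun_zero, sub_zero, sub_zero]

lemma one_sub_nlProb (K : ℝ) : 1 - nlProb K = nlProb (-K) := by
  unfold nlProb
  field_simp
  ring_nf

lemma log_nlProb (K : ℝ) : log (nlProb K) = K - log (2 * cosh K) := by
  rw [nlProb, log_div (exp_ne_zero K) (by positivity), log_exp, cosh_eq]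
  ring_nf

lemma nlProb_sub_nlProb_neg (K : ℝ) : nlProb K - nlProb (-K) = tanh K := by
  rw [nlProb, nlProb, tanh_eq_sinh_div_cosh, sinh_eq, cosh_eq, neg_neg]
  field_simp
  ring

lemma binEntropy_nlProb (K : ℝ) :
    binEntropy (nlProb K) = log (2 * cosh K) - K * tanh K := by
  rw [binEntropy_eq_negMulLog_add_negMulLog_one_sub, one_sub_nlProb, negMulLog, negMulLog,
    log_nlProb, log_nlProb, cosh_neg, ← nlProb_sub_nlProb_neg, ← one_sub_nlProb]
  ring

theorem replica_limit_general (K : ℝ) :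
    Ffun K 0 = 0 ∧
    Tendsto (fun n : ℝ => Ffun K n / n) (𝓝[≠] 0)
      (𝓝 (K * sinh K - cosh K * (log 2 / 2 + log (cosh K)))) ∧
    (K * sinh K - cosh K * (log 2 / 2 + log (cosh K)) = 0 ↔
      -nlProb K * log (nlProb K) - (1 - nlProb K) * log (1 - nlProb K) = log 2 / 2) := by
  refine ⟨Ffun_zero K, tendsto_Ffun_div K, ?_⟩
  have hentropy : -nlProb K * log (nlProb K) - (1 - nlProb K) * log (1 - nlProb K) =
      binEntropy (nlProb K) := by
    rw [binEntropy_eq_negMulLog_add_negMulLog_one_sub, negMulLog, negMulLog]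
    ring
  have hcosh := (cosh_pos K).ne'
  rw [hentropy, binEntropy_nlProb, log_mul two_ne_zero hcosh, tanh_eq_sinh_div_cosh]
  constructor <;> intro h <;> field_simp at h ⊢ <;> linarith

/-- The replica limit `n → 0` of the fixed-point condition: for fixed `K > 0`,
`F(0) = 0`, `F(n)/n → K sinh K - cosh K ((log 2)/2 + log cosh K)` as `n → 0`, and
this limit vanishes iff `-p log p - (1-p) log(1-p) = (log 2)/2` with
`p = e^K/(e^K + e^{-K})` (Conjecture 2 of the paper). -/
theorem replica_limit (K : ℝ) (hK : 0 < K) :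
    Ffun K 0 = 0 ∧
    Tendsto (fun n : ℝ => Ffun K n / n) (𝓝[≠] 0)
      (𝓝 (K * sinh K - cosh K * (log 2 / 2 + log (cosh K)))) ∧
    (K * sinh K - cosh K * (log 2 / 2 + log (cosh K)) = 0 ↔
      -nlProb K * log (nlProb K) - (1 - nlProb K) * log (1 - nlProb K) = log 2 / 2) :=
  replica_limit_general K
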